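/- Let d be a positive integer and let h be a mixing density with 0 < ∫_0^∞ u^{d/2} h(u) du < ∞. For s ≥ 0 define N(s) = ∫_0^∞ v^{d/2} e^{-sv/2} h(v) dv and the density ψ(u; s) = u^{d/2} e^{-su/2} h(u) / N(s) for u > 0. Then for every l > 0, every s ∈ [0, l], and every u > 0, ψ(u; s) ≥ ε_l · ψ(u; l), where ε_l = N(l)/N(0) ∈ (0, 1]. -/
import Mathlib


open MeasureTheory Set
open scoped ENNReal

/-- A mixing density: a Borel measurable function on `(0,∞)` (extended to all of `ℝ`),
nonnegative on `(0,∞)`, integrating to 1 over `(0,∞)`. -/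
def IsMixingDensity (h : ℝ → ℝ) : Prop :=
  Measurable h ∧ (∀ u ∈ Ioi (0:ℝ), 0 ≤ h u) ∧
    ∫⁻ u in Ioi (0:ℝ), ENNReal.ofReal (h u) = 1

/-- `N(s) = ∫_0^∞ v^{d/2} e^{-sv/2} h(v) dv`. -/
noncomputable def N (d : ℕ) (h : ℝ → ℝ) (s : ℝ) : ℝ :=
  ∫ v in Ioi (0:ℝ), v ^ ((d : ℝ) / 2) * Real.exp (-(s * v) / 2) * h v

/-- `ψ(u; s) = u^{d/2} e^{-su/2} h(u) / N(s)`. -/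
noncomputable def psi (d : ℕ) (h : ℝ → ℝ) (u s : ℝ) : ℝ :=
  u ^ ((d : ℝ) / 2) * Real.exp (-(s * u) / 2) * h u / N d h s

/-- Uniform minorization of the family `ψ(·; s)` for `s ∈ [0, l]`:
`ψ(u; s) ≥ ε_l ψ(u; l)` where `ε_l = N(l)/N(0) ∈ (0,1]`. -/
theorem psi_minorization (d : ℕ) (hd : 0 < d) (h : ℝ → ℝ)
    (hmix : IsMixingDensity h)
    (hint : IntegrableOn (fun u => u ^ ((d : ℝ) / 2) * h u) (Ioi (0:ℝ)))
    (hpos : 0 < ∫ u in Ioi (0:ℝ), u ^ ((d : ℝ) / 2) * h u) :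
    ∀ l : ℝ, 0 < l →
      (0 < N d h l / N d h 0 ∧ N d h l / N d h 0 ≤ 1) ∧
      ∀ s ∈ Icc (0:ℝ) l, ∀ u : ℝ, 0 < u →
        psi d h u s ≥ (N d h l / N d h 0) * psi d h u l := by
  obtain ⟨hmeas, hnn, -⟩ := hmix
  have hgmeas : ∀ s : ℝ,
      Measurable (fun v : ℝ => v ^ ((d:ℝ)/2) * Real.exp (-(s*v)/2) * h v) := by
    intro s; fun_prop
  have hexple : ∀ s v : ℝ, 0 ≤ s → 0 < v → Real.exp (-(s*v)/2) ≤ 1 := by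
    intro s v hs hv
    rw [Real.exp_le_one_iff]
    nlinarith
  have hgnn : ∀ s : ℝ, ∀ v ∈ Ioi (0:ℝ),
      0 ≤ v ^ ((d:ℝ)/2) * Real.exp (-(s*v)/2) * h v := by
    intro s v hv
    exact mul_nonneg (mul_nonneg (Real.rpow_nonneg (le_of_lt hv) _)
      (Real.exp_pos _).le) (hnn v hv)
  have hgint : ∀ s : ℝ, 0 ≤ s →
      IntegrableOn (fun v => v ^ ((d:ℝ)/2) * Real.exp (-(s*v)/2) * h v) (Ioi (0:ℝ)) := by
    intro s hs
    refine hint.mono' ((hgmeas s).aestronglyMeasurable) ?_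
    filter_upwards [ae_restrict_mem measurableSet_Ioi] with v hv
    rw [Real.norm_eq_abs, abs_of_nonneg (hgnn s v hv)]
    calc v ^ ((d:ℝ)/2) * Real.exp (-(s*v)/2) * h v
        ≤ v ^ ((d:ℝ)/2) * 1 * h v := by
          apply mul_le_mul_of_nonneg_right _ (hnn v hv)
          exact mul_le_mul_of_nonneg_left (hexple s v hs hv)
            (Real.rpow_nonneg (le_of_lt hv) _)
      _ = v ^ ((d:ℝ)/2) * h v := by ring
  have hN0 : N d h 0 = ∫ u in Ioi (0:ℝ), u ^ ((d : ℝ) / 2) * h u := by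
    unfold N; simp
  have hNle : ∀ s : ℝ, 0 ≤ s → N d h s ≤ N d h 0 := by
    intro s hs
    rw [hN0]
    apply setIntegral_mono_on (hgint s hs) hint measurableSet_Ioi
    intro v hv
    calc v ^ ((d:ℝ)/2) * Real.exp (-(s*v)/2) * h v
        ≤ v ^ ((d:ℝ)/2) * 1 * h v := by
          apply mul_le_mul_of_nonneg_right _ (hnn v hv)
          exact mul_le_mul_of_nonneg_left (hexple s v hs hv)
            (Real.rpow_nonneg (le_of_lt hv) _)
      _ = v ^ ((d:ℝ)/2) * h v := by ring
  have hNpos : ∀ s : ℝ, 0 ≤ s → 0 < N d h s := by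
    intro s hs
    have hsupp : Function.support (fun v : ℝ => v ^ ((d:ℝ)/2) * Real.exp (-(s*v)/2) * h v)
        = Function.support (fun v : ℝ => v ^ ((d:ℝ)/2) * h v) := by
      ext v
      simp [Function.support, mul_eq_zero, Real.exp_ne_zero, or_assoc]

    have h0 : 0 < volume (Function.support (fun v : ℝ => v ^ ((d:ℝ)/2) * h v) ∩ Ioi 0) := by
      rw [← setIntegral_pos_iff_support_of_nonneg_ae ?_ hint]
      · exact hpos
      · filter_upwards [ae_restrict_mem measurableSet_Ioi] with v hv
        exact mul_nonneg (Real.rpow_nonneg (le_of_lt hv) _) (hnn v hv)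
    unfold N
    rw [setIntegral_pos_iff_support_of_nonneg_ae ?_ (hgint s hs)]
    · rw [hsupp]; exact h0
    · filter_upwards [ae_restrict_mem measurableSet_Ioi] with v hv
      exact hgnn s v hv
  intro l hl
  have hNl := hNpos l hl.le
  have hN0pos := hNpos 0 le_rfl
  refine ⟨⟨div_pos hNl hN0pos, div_le_one_of_le₀ (hNle l hl.le) hN0pos.le⟩, ?_⟩
  intro s hs u hu
  have hNs := hNpos s hs.1
  unfold psi
  have key : (N d h l / N d h 0) *
      (u ^ ((d : ℝ) / 2) * Real.exp (-(l * u) / 2) * h u / N d h l)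
      = u ^ ((d : ℝ) / 2) * Real.exp (-(l * u) / 2) * h u / N d h 0 := by
    field_simp
  rw [ge_iff_le, key]
  apply div_le_div₀ (hgnn s u hu) _ hNs (hNle s hs.1)
  apply mul_le_mul_of_nonneg_right _ (hnn u hu)
  apply mul_le_mul_of_nonneg_left _ (Real.rpow_nonneg (le_of_lt hu) _)
  apply Real.exp_le_exp.mpr
  nlinarith [hs.2, hu]
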